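/- arXiv:1701.04900 — 4 statements merged into one kernel-verified Lean document; each statement's English description precedes it below -/
import Mathlib

section
/- Let K ⊆ ℝᵐ be nonempty, closed and convex, let f̃(·; y) be continuously differentiable and strongly convex with modulus c on K, with ∇f̃(y; y) = ∇_y f(y), and let g be convex on K. If x̂ minimizes f̃(·; y) + g over K, then (x̂ − y)ᵀ ∇_y f(y) + g(x̂) − g(y) ≤ −c‖x̂ − y‖². -/
/-!
Along the segment `t ↦ lineMap x y t`, uniform convexity bounds the difference quotients of `f`
at `x` by `f y - f x - (1 - t) * φ ‖x - y‖`; letting `t → 0⁺` gives a growth bound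
`f x + φ ‖x - y‖ ≤ f y` at a minimizer `x` (the quotients are nonnegative) and the first-order
bound `f x + f' (y - x) + φ ‖x - y‖ ≤ f y` at a point of differentiability (the quotients tend
to `f' (y - x)`). The first, for `f̃ + g` at `x̂`, plus the second, for `f̃` at `y`, is the claim.
-/

open Filter Topology Set AffineMap

section UniformConvexOn

variable {E : Type*} [NormedAddCommGroup E] [NormedSpace ℝ E] {s : Set E} {φ : ℝ → ℝ}
  {f : E → ℝ} {x y : E}

lemma UniformConvexOn.slope_lineMap_le (hf : UniformConvexOn s φ f) (hx : x ∈ s) (hy : y ∈ s)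
    {t : ℝ} (ht₀ : 0 < t) (ht₁ : t ≤ 1) :
    slope (fun t ↦ f (lineMap x y t)) 0 t ≤ f y - f x - (1 - t) * φ ‖x - y‖ := by
  have h := hf.2 hx hy (sub_nonneg.2 ht₁) ht₀.le (sub_add_cancel 1 t)
  rw [smul_eq_mul, smul_eq_mul, ← lineMap_apply_module] at h
  rw [slope_def_field, lineMap_apply_zero, sub_zero, div_le_iff₀ ht₀]
  linarith

lemma UniformConvexOn.le_sub_of_tendsto_le_slope (hf : UniformConvexOn s φ f) (hx : x ∈ s)
    (hy : y ∈ s) {g : ℝ → ℝ} {d : ℝ} (hg : Tendsto g (𝓝[>] 0) (𝓝 d))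
    (hle : ∀ t ∈ Ioo (0 : ℝ) 1, g t ≤ slope (fun t ↦ f (lineMap x y t)) 0 t) :
    d ≤ f y - f x - φ ‖x - y‖ := by
  have hcont : Continuous fun t : ℝ ↦ f y - f x - (1 - t) * φ ‖x - y‖ := by fun_prop
  have hlim := (hcont.tendsto 0).mono_left (nhdsWithin_le_nhds (s := Ioi 0))
  rw [sub_zero, one_mul] at hlim
  refine le_of_tendsto_of_tendsto hg hlim ?_
  filter_upwards [Ioo_mem_nhdsGT (zero_lt_one' ℝ)] with t ht
  exact (hle t ht).trans (hf.slope_lineMap_le hx hy ht.1 ht.2.le)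

lemma UniformConvexOn.add_le_of_isMinOn (hf : UniformConvexOn s φ f) (hmin : IsMinOn f s x)
    (hx : x ∈ s) (hy : y ∈ s) : f x + φ ‖x - y‖ ≤ f y := by
  have := hf.le_sub_of_tendsto_le_slope hx hy tendsto_const_nhds fun t ht ↦ by
    rw [slope_def_field, lineMap_apply_zero, sub_zero]
    refine div_nonneg (sub_nonneg.2 (hmin ?_)) ht.1.le
    exact hf.1.lineMap_mem hx hy ⟨ht.1.le, ht.2.le⟩
  linarith

lemma UniformConvexOn.add_fderiv_add_le (hf : UniformConvexOn s φ f) {f' : E →L[ℝ] ℝ}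
    (hd : HasFDerivAt f f' x) (hx : x ∈ s) (hy : y ∈ s) :
    f x + f' (y - x) + φ ‖x - y‖ ≤ f y := by
  have hline : HasDerivAt (fun t : ℝ ↦ f (lineMap x y t)) (f' (y - x)) 0 := by
    refine HasFDerivAt.comp_hasDerivAt (0 : ℝ) ?_ AffineMap.hasDerivAt_lineMap
    rwa [lineMap_apply_zero]
  have := hf.le_sub_of_tendsto_le_slope hx hy
    ((hasDerivAt_iff_tendsto_slope.1 hline).mono_left (nhdsWithin_mono _ fun t ht ↦ ne_of_gt ht))
    fun t _ ↦ le_rfl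
  linarith

end UniformConvexOn

theorem stmt_10_general (m : ℕ) (K : Set (EuclideanSpace ℝ (Fin m)))
    (ftilde g : EuclideanSpace ℝ (Fin m) → ℝ) (c : ℝ)
    (hdiff : ContDiff ℝ 1 ftilde)
    (hsc : StrongConvexOn K c ftilde)
    (hgcv : ConvexOn ℝ K g)
    (y : EuclideanSpace ℝ (Fin m)) (hy : y ∈ K)
    (v : EuclideanSpace ℝ (Fin m))
    -- gradient consistency: the gradient of the surrogate at y equals ∇f(y) =: v
    (hgrad : gradient ftilde y = v)
    (xhat : EuclideanSpace ℝ (Fin m)) (hxhatK : xhat ∈ K)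
    (hmin : ∀ z ∈ K, ftilde xhat + g xhat ≤ ftilde z + g z) :
    (inner ℝ (xhat - y) v : ℝ) + g xhat - g y ≤ -c * ‖xhat - y‖ ^ 2 := by
  have hgradient : HasGradientAt ftilde v y :=
    hgrad ▸ (hdiff.differentiable one_ne_zero y).hasGradientAt
  have hsum := hsc.add hgcv.uniformConvexOn_zero
  have hquad := hsum.add_le_of_isMinOn (isMinOn_iff.2 hmin) hxhatK hy
  have hfirst := hsc.add_fderiv_add_le hgradient.hasFDerivAt hy hxhatK
  simp only [Pi.add_apply, Pi.zero_apply, add_zero,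
    InnerProductSpace.toDual_apply_apply] at hquad hfirst
  rw [norm_sub_rev] at hfirst
  rw [real_inner_comm]
  linarith

theorem stmt_10 (m : ℕ) (K : Set (EuclideanSpace ℝ (Fin m)))
    (hKne : K.Nonempty) (hKcl : IsClosed K) (hKcv : Convex ℝ K)
    (ftilde g : EuclideanSpace ℝ (Fin m) → ℝ) (c : ℝ) (hc : 0 < c)
    (hdiff : ContDiff ℝ 1 ftilde)
    (hsc : StrongConvexOn K c ftilde)
    (hgcv : ConvexOn ℝ K g)
    (y : EuclideanSpace ℝ (Fin m)) (hy : y ∈ K)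
    (v : EuclideanSpace ℝ (Fin m))
    -- gradient consistency: the gradient of the surrogate at y equals ∇f(y) =: v
    (hgrad : gradient ftilde y = v)
    (xhat : EuclideanSpace ℝ (Fin m)) (hxhatK : xhat ∈ K)
    (hmin : ∀ z ∈ K, ftilde xhat + g xhat ≤ ftilde z + g z) :
    (inner ℝ (xhat - y) v : ℝ) + g xhat - g y ≤ -c * ‖xhat - y‖ ^ 2 :=
  stmt_10_general m K ftilde g c hdiff hsc hgcv y hy v hgrad xhat hxhatK hmin
end

section
/- Let K ⊆ ℝᵐ be closed and convex, let f̃(·;·) satisfy: f̃(·;y) is strongly convex with modulus 1 (or more generally the proximal model with quadratic term (1/2)‖y−x‖²), and define ŷ = argmin_{y∈K} { ∇f(x)ᵀ(y−x) + g(y) + (1/2)‖y−x‖² } and x̂ = argmin_{y∈K} { f̃(y; x̃) + g(y) }, where ∇f̃(z; x̃) is Lipschitz in z with constant L_E, Lipschitz in the second argument with constant L_B, and ∇f̃(x; x) = ∇f(x). Then ‖x̂ − ŷ‖ ≤ (1 + L_E)‖x̂ − x‖ + L_B‖x − x̃‖. -/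
/-!
Both points satisfy the first-order optimality condition of a convex composite problem over `K`:
`g ŷ ≤ ⟪∇f(x) + (ŷ - x), w - ŷ⟫ + g w` and `g x̂ ≤ ⟪∇f̃(x̂; x̃), w - x̂⟫ + g w` for all `w ∈ K`.
Testing the first at `x̂`, the second at `ŷ` and adding cancels `g` and leaves
`‖x̂ - ŷ‖² ≤ ⟪∇f(x) - ∇f̃(x̂; x̃) + (x̂ - x), x̂ - ŷ⟫`. Cauchy–Schwarz, `∇f(x) = ∇f̃(x; x)` and
the two Lipschitz bounds on `∇f̃` then give the claim.
-/

open Set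
open scoped RealInnerProductSpace

theorem IsMinOn.le_fderiv_add_of_convexOn {E : Type*} [NormedAddCommGroup E] [NormedSpace ℝ E]
    {K : Set E} {F g : E → ℝ} {F' : StrongDual ℝ E}
    {y w : E} (hmin : IsMinOn (F + g) K y) (hK : Convex ℝ K) (hg : ConvexOn ℝ K g)
    (hF : HasFDerivAt F F' y) (hy : y ∈ K) (hw : w ∈ K) :
    g y ≤ F' (w - y) + g w := by
  set φ : ℝ → ℝ := fun t => F (y + t • (w - y)) + t * (g w - g y)
  have hφ : HasDerivAt φ (F' (w - y) + (g w - g y)) 0 := by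
    have hline : HasDerivAt (fun t : ℝ => y + t • (w - y)) (w - y) 0 := by
      simpa using ((hasDerivAt_id (0 : ℝ)).smul_const (w - y)).const_add y
    have hF0 : HasFDerivAt F F' (y + (0 : ℝ) • (w - y)) := by simpa using hF
    exact (hF0.comp_hasDerivAt 0 hline).add (hasDerivAt_mul_const _)
  -- `g` lies below its chord on the segment, so `φ` dominates `F + g - g y` there
  have hφmin : IsMinOn φ (Icc 0 1) 0 := by
    intro t ⟨ht0, ht1⟩
    have hseg : y + t • (w - y) = (1 - t) • y + t • w := by module
    have hchord := hg.2 hy hw (sub_nonneg.2 ht1) ht0 (sub_add_cancel 1 t)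
    have hle : F y + g y ≤ F (y + t • (w - y)) + g (y + t • (w - y)) :=
      hmin (hseg ▸ hK hy hw (sub_nonneg.2 ht1) ht0 (sub_add_cancel 1 t))
    simp only [smul_eq_mul, ← hseg] at hchord
    show F (y + (0 : ℝ) • (w - y)) + 0 * (g w - g y) ≤ F (y + t • (w - y)) + t * (g w - g y)
    rw [zero_smul, add_zero, zero_mul, add_zero]
    linarith
  have hcone : (1 : ℝ) ∈ posTangentConeAt (Icc 0 1) 0 :=
    mem_posTangentConeAt_of_segment_subset (by simp [segment_eq_Icc])
  have h := hφmin.localize.hasFDerivWithinAt_nonneg hφ.hasFDerivAt.hasFDerivWithinAt hcone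
  rw [ContinuousLinearMap.toSpanSingleton_apply, one_smul] at h
  linarith

theorem norm_sub_le_of_lipschitz₂ {E E' F : Type*} [SeminormedAddCommGroup E]
    [SeminormedAddCommGroup E'] [SeminormedAddCommGroup F] {G : E → E' → F} {L₁ L₂ : ℝ}
    (h₁ : ∀ y z z', ‖G z y - G z' y‖ ≤ L₁ * ‖z - z'‖)
    (h₂ : ∀ z y y', ‖G z y - G z y'‖ ≤ L₂ * ‖y - y'‖) (z z' : E) (y y' : E') :
    ‖G z y - G z' y'‖ ≤ L₁ * ‖z - z'‖ + L₂ * ‖y - y'‖ :=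
  calc ‖G z y - G z' y'‖ ≤ ‖G z y - G z' y‖ + ‖G z' y - G z' y'‖ :=
        norm_sub_le_norm_sub_add_norm_sub _ _ _
    _ ≤ L₁ * ‖z - z'‖ + L₂ * ‖y - y'‖ := add_le_add (h₁ y z z') (h₂ z' y y')

section

variable {E : Type*} [NormedAddCommGroup E] [InnerProductSpace ℝ E]

theorem norm_le_of_sq_le_inner {c d : E} (h : ‖d‖ ^ 2 ≤ ⟪c, d⟫) : ‖d‖ ≤ ‖c‖ := by
  nlinarith [real_inner_le_norm c d, norm_nonneg c, norm_nonneg d]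

theorem norm_sub_le_of_inner_add_inner_nonneg {a b x u v : E}
    (h : 0 ≤ ⟪a + (v - x), u - v⟫ + ⟪b, v - u⟫) : ‖u - v‖ ≤ ‖a - b‖ + ‖u - x‖ := by
  have hsplit : ⟪a + (v - x), u - v⟫ + ⟪b, v - u⟫ = ⟪(a - b) + (u - x), u - v⟫ - ‖u - v‖ ^ 2 := by
    rw [show v - x = (u - x) - (u - v) by abel, show v - u = -(u - v) by abel]
    generalize u - v = d
    simp only [inner_add_left, inner_sub_left, inner_neg_right, real_inner_self_eq_norm_sq]
    ring
  calc ‖u - v‖ ≤ ‖(a - b) + (u - x)‖ := norm_le_of_sq_le_inner (by linarith)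
    _ ≤ ‖a - b‖ + ‖u - x‖ := norm_add_le _ _

variable [CompleteSpace E]

theorem hasGradientAt_inner_sub_add_half_norm_sub_sq (a x y : E) :
    HasGradientAt (fun z => ⟪a, z - x⟫ + (1 / 2) * ‖z - x‖ ^ 2) (a + (y - x)) y := by
  rw [hasGradientAt_iff_hasFDerivAt]
  have hsub : HasFDerivAt (fun z : E => z - x) (ContinuousLinearMap.id ℝ E) y :=
    (hasFDerivAt_id y).sub_const x
  have h := ((innerSL ℝ a).hasFDerivAt.comp y hsub).add (hsub.norm_sq.const_mul (1 / 2))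
  refine h.congr_fderiv (ContinuousLinearMap.ext fun v => ?_)
  simp

theorem IsMinOn.le_inner_gradient_add_of_convexOn {K : Set E} {F g : E → ℝ} {G y w : E}
    (hmin : IsMinOn (F + g) K y) (hK : Convex ℝ K) (hg : ConvexOn ℝ K g)
    (hF : HasGradientAt F G y) (hy : y ∈ K) (hw : w ∈ K) :
    g y ≤ ⟪G, w - y⟫ + g w := by
  simpa using hmin.le_fderiv_add_of_convexOn hK hg (hasGradientAt_iff_hasFDerivAt.1 hF) hy hw

end

theorem stmt_12_general (m : ℕ) (K : Set (EuclideanSpace ℝ (Fin m)))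
    (hKcv : Convex ℝ K)
    (f g : EuclideanSpace ℝ (Fin m) → ℝ)
    (hgcv : ConvexOn ℝ K g)
    (L_E L_B : ℝ)
    -- the surrogate f̃(z; y): first argument z, second argument the base point y
    (ftilde : EuclideanSpace ℝ (Fin m) → EuclideanSpace ℝ (Fin m) → ℝ)
    -- gradient of the surrogate with respect to its first argument
    (Gf : EuclideanSpace ℝ (Fin m) → EuclideanSpace ℝ (Fin m) → EuclideanSpace ℝ (Fin m))
    (hGrad : ∀ z y, HasGradientAt (fun w => ftilde w y) (Gf z y) z)
    -- Lipschitz continuity of the gradient in the first argument (constant L_E)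
    (hLipE : ∀ y z z', ‖Gf z y - Gf z' y‖ ≤ L_E * ‖z - z'‖)
    -- Lipschitz continuity of the gradient in the second argument (constant L_B)
    (hLipB : ∀ z y y', ‖Gf z y - Gf z y'‖ ≤ L_B * ‖y - y'‖)
    -- gradient consistency: ∇f̃(x; x) = ∇f(x)
    (hcons : ∀ x, Gf x x = gradient f x)
    (x xtil : EuclideanSpace ℝ (Fin m))
    (yhat xhat : EuclideanSpace ℝ (Fin m)) (hyhatK : yhat ∈ K) (hxhatK : xhat ∈ K)
    -- ŷ minimizes the proximal linearized model at x
    (hyhat : ∀ w ∈ K,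
      (inner ℝ (gradient f x) (yhat - x) : ℝ) + g yhat + (1 / 2) * ‖yhat - x‖ ^ 2 ≤
        (inner ℝ (gradient f x) (w - x) : ℝ) + g w + (1 / 2) * ‖w - x‖ ^ 2)
    -- x̂ minimizes the surrogate model at the delayed point x̃
    (hxhat : ∀ w ∈ K, ftilde xhat xtil + g xhat ≤ ftilde w xtil + g w) :
    ‖xhat - yhat‖ ≤ (1 + L_E) * ‖xhat - x‖ + L_B * ‖x - xtil‖ := by
  have hyhatMin : IsMinOn ((fun z => ⟪gradient f x, z - x⟫ + (1 / 2) * ‖z - x‖ ^ 2) + g) K yhat :=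
    isMinOn_iff.2 fun w hw => by simp only [Pi.add_apply]; linarith [hyhat w hw]
  have hxhatMin : IsMinOn ((fun w => ftilde w xtil) + g) K xhat := isMinOn_iff.2 hxhat
  have hyhatOpt := hyhatMin.le_inner_gradient_add_of_convexOn hKcv hgcv
    (hasGradientAt_inner_sub_add_half_norm_sub_sq _ x yhat) hyhatK hxhatK
  have hxhatOpt := hxhatMin.le_inner_gradient_add_of_convexOn hKcv hgcv
    (hGrad xhat xtil) hxhatK hyhatK
  have hgrad := norm_sub_le_of_lipschitz₂ hLipE hLipB x xhat x xtil
  rw [hcons, norm_sub_rev x xhat] at hgrad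
  calc ‖xhat - yhat‖ ≤ ‖gradient f x - Gf xhat xtil‖ + ‖xhat - x‖ :=
        norm_sub_le_of_inner_add_inner_nonneg (by linarith)
    _ ≤ (1 + L_E) * ‖xhat - x‖ + L_B * ‖x - xtil‖ := by linarith

theorem stmt_12 (m : ℕ) (K : Set (EuclideanSpace ℝ (Fin m)))
    (hKcl : IsClosed K) (hKcv : Convex ℝ K)
    (f g : EuclideanSpace ℝ (Fin m) → ℝ) (hf : ContDiff ℝ 1 f)
    (hgcv : ConvexOn ℝ K g)
    (L_E L_B : ℝ) (hLE : 0 ≤ L_E) (hLB : 0 ≤ L_B)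
    -- the surrogate f̃(z; y): first argument z, second argument the base point y
    (ftilde : EuclideanSpace ℝ (Fin m) → EuclideanSpace ℝ (Fin m) → ℝ)
    -- gradient of the surrogate with respect to its first argument
    (Gf : EuclideanSpace ℝ (Fin m) → EuclideanSpace ℝ (Fin m) → EuclideanSpace ℝ (Fin m))
    (hGrad : ∀ z y, HasGradientAt (fun w => ftilde w y) (Gf z y) z)
    -- strong convexity with modulus 1 of f̃(·; y)
    (hsc : ∀ y ∈ K, StrongConvexOn K 1 (fun w => ftilde w y))
    -- Lipschitz continuity of the gradient in the first argument (constant L_E)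
    (hLipE : ∀ y z z', ‖Gf z y - Gf z' y‖ ≤ L_E * ‖z - z'‖)
    -- Lipschitz continuity of the gradient in the second argument (constant L_B)
    (hLipB : ∀ z y y', ‖Gf z y - Gf z y'‖ ≤ L_B * ‖y - y'‖)
    -- gradient consistency: ∇f̃(x; x) = ∇f(x)
    (hcons : ∀ x, Gf x x = gradient f x)
    (x xtil : EuclideanSpace ℝ (Fin m)) (hx : x ∈ K) (hxtil : xtil ∈ K)
    (yhat xhat : EuclideanSpace ℝ (Fin m)) (hyhatK : yhat ∈ K) (hxhatK : xhat ∈ K)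
    -- ŷ minimizes the proximal linearized model at x
    (hyhat : ∀ w ∈ K,
      (inner ℝ (gradient f x) (yhat - x) : ℝ) + g yhat + (1 / 2) * ‖yhat - x‖ ^ 2 ≤
        (inner ℝ (gradient f x) (w - x) : ℝ) + g w + (1 / 2) * ‖w - x‖ ^ 2)
    -- x̂ minimizes the surrogate model at the delayed point x̃
    (hxhat : ∀ w ∈ K, ftilde xhat xtil + g xhat ≤ ftilde w xtil + g w) :
    ‖xhat - yhat‖ ≤ (1 + L_E) * ‖xhat - x‖ + L_B * ‖x - xtil‖ :=
  stmt_12_general m K hKcv f g hgcv L_E L_B ftilde Gf hGrad hLipE hLipB hcons x xtil yhat xhat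
    hyhatK hxhatK hyhat hxhat
end

section
/- Let f : ℝⁿ → ℝ be C¹ with L_f-Lipschitz gradient, g : ℝⁿ → ℝ convex (block separable), K convex, and suppose the update x⁺ = x + γ(x̂ − x̃ component) satisfies the sufficient-decrease chain: if (x̂ − x̃)ᵀ∇f(x̃) + g(x̂) − g(x̃) ≤ −c‖x̂ − x̃‖², then F(x⁺) ≤ F(x) − γ(c − γL_f)‖x̂ − x̃‖² + (L_f/2)‖x − x̃‖², where F = f + g, x̃ is a delayed iterate with the updated block agreeing between x and x̃, and γ ∈ (0,1]. -/
/-!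
Moving only block `i` by `γ d`, with `d = x̂ᵢ − x̃ᵢ`, the descent lemma bounds the smooth part by
`γ d ∂ᵢf(x) + (L_f/2) γ² d²` and convexity of `gᵢ` bounds the nonsmooth part by `γ (gᵢ(x̂ᵢ) − gᵢ(x̃ᵢ))`.
Replacing `∂ᵢf(x)` by `∂ᵢf(x̃)`, where the sufficient-descent inequality applies, costs
`γ d (∂ᵢf(x) − ∂ᵢf(x̃)) ≤ |γ d| L_f ‖x − x̃‖ ≤ (L_f/2)(γ² d² + ‖x − x̃‖²)` by Young's inequality.
-/

open RealInnerProductSpace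

theorem le_add_inner_gradient_add_of_lipschitz_gradient {E : Type*} [NormedAddCommGroup E]
    [InnerProductSpace ℝ E] [CompleteSpace E] {f : E → ℝ} {L : ℝ} (hf : Differentiable ℝ f)
    (hLip : ∀ x y, ‖gradient f x - gradient f y‖ ≤ L * ‖x - y‖) (x v : E) :
    f (x + v) ≤ f x + ⟪gradient f x, v⟫ + L / 2 * ‖v‖ ^ 2 := by
  -- `φ` is antitone on `[0, 1]`: by Cauchy–Schwarz and the Lipschitz bound, `φ' t ≤ 0` for `t ≥ 0`.
  set φ : ℝ → ℝ := fun t => f (x + t • v) - t * ⟪gradient f x, v⟫ - L / 2 * t ^ 2 * ‖v‖ ^ 2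
  set φ' : ℝ → ℝ := fun t => ⟪gradient f (x + t • v) - gradient f x, v⟫ - L * t * ‖v‖ ^ 2
  have hφ : ∀ t, HasDerivAt φ (φ' t) t := by
    intro t
    have hline : HasDerivAt (fun s : ℝ => x + s • v) v t := by
      simpa using ((hasDerivAt_id t).smul_const v).const_add x
    have hfline : HasDerivAt (fun s : ℝ => f (x + s • v)) ⟪gradient f (x + t • v), v⟫ t := by
      simpa [Function.comp_def] using
        (hf (x + t • v)).hasGradientAt.hasFDerivAt.comp_hasDerivAt t hline
    refine ((hfline.sub ((hasDerivAt_id t).mul_const ⟪gradient f x, v⟫)).sub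
      (((hasDerivAt_pow 2 t).const_mul (L / 2)).mul_const (‖v‖ ^ 2))).congr_deriv ?_
    simp only [φ', inner_sub_left]
    ring
  have hφ'_nonpos : ∀ t, 0 ≤ t → φ' t ≤ 0 := by
    intro t ht
    have hgrad := hLip (x + t • v) x
    rw [add_sub_cancel_left, norm_smul, Real.norm_of_nonneg ht] at hgrad
    have hcs := real_inner_le_norm (gradient f (x + t • v) - gradient f x) v
    nlinarith [mul_le_mul_of_nonneg_right hgrad (norm_nonneg v)]
  have hanti : AntitoneOn φ (Set.Icc 0 1) :=
    antitoneOn_of_hasDerivWithinAt_nonpos (convex_Icc 0 1)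
      (fun t _ => (hφ t).continuousAt.continuousWithinAt)
      (fun t _ => (hφ t).hasDerivWithinAt)
      (fun t ht => hφ'_nonpos t (interior_subset ht).1)
  have hφ01 := hanti (by norm_num : (0 : ℝ) ∈ Set.Icc 0 1) (by norm_num : (1 : ℝ) ∈ Set.Icc 0 1)
    zero_le_one
  simp only [φ, one_smul, zero_smul, add_zero] at hφ01
  linarith

theorem ConvexOn.le_add_mul_sub {g : ℝ → ℝ} (hg : ConvexOn ℝ Set.univ g) {γ : ℝ}
    (hγ0 : 0 ≤ γ) (hγ1 : γ ≤ 1) (a b : ℝ) :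
    g (a + γ * (b - a)) ≤ g a + γ * (g b - g a) := by
  have h := hg.2 (Set.mem_univ a) (Set.mem_univ b) (sub_nonneg.2 hγ1) hγ0 (sub_add_cancel 1 γ)
  simp only [smul_eq_mul] at h
  rw [show (1 - γ) * a + γ * b = a + γ * (b - a) by ring] at h
  linarith

theorem Finset.sum_apply_update_sub_sum {ι : Type*} [Fintype ι] [DecidableEq ι]
    (g : ι → ℝ → ℝ) (x : ι → ℝ) (i : ι) (a : ℝ) :
    ∑ j, g j (Function.update x i a j) - ∑ j, g j (x j) = g i a - g i (x i) := by
  rw [← Finset.sum_sub_distrib, Finset.sum_eq_single i]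
  · simp
  · intro j _ hji
    simp [Function.update_of_ne hji]
  · simp

theorem mul_le_half_mul_sq_add_half_mul_sq {a b r L : ℝ} (hL : 0 ≤ L) (hb : |b| ≤ L * r) :
    a * b ≤ L / 2 * a ^ 2 + L / 2 * r ^ 2 := by
  have hab : a * b ≤ |a| * (L * r) :=
    (le_abs_self _).trans ((abs_mul a b).trans_le (mul_le_mul_of_nonneg_left hb (abs_nonneg a)))
  have hyoung := two_mul_le_add_sq |a| r
  rw [sq_abs] at hyoung
  nlinarith [mul_le_mul_of_nonneg_left hyoung hL]

theorem abs_gradient_apply_sub_le {ι : Type*} [Fintype ι] {f : EuclideanSpace ℝ ι → ℝ} {L : ℝ}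
    (hLip : ∀ x y, ‖gradient f x - gradient f y‖ ≤ L * ‖x - y‖) (x y : EuclideanSpace ℝ ι) (i : ι) :
    |gradient f x i - gradient f y i| ≤ L * ‖x - y‖ := by
  rw [← Real.norm_eq_abs]
  exact (PiLp.norm_apply_le (gradient f x - gradient f y) i).trans (hLip x y)

theorem stmt_18_general (n : ℕ) (f : EuclideanSpace ℝ (Fin n) → ℝ) (L_f c γ : ℝ)
    (hf : ContDiff ℝ 1 f) (hLf : 0 < L_f)
    (hγ0 : 0 < γ) (hγ1 : γ ≤ 1)
    (gblk : Fin n → ℝ → ℝ) (hgcv : ∀ j, ConvexOn ℝ Set.univ (gblk j))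
    (hLip : ∀ x y : EuclideanSpace ℝ (Fin n),
      ‖gradient f x - gradient f y‖ ≤ L_f * ‖x - y‖)
    (x xtil xhat : EuclideanSpace ℝ (Fin n)) (i : Fin n)
    -- Assumption D4: the updated block agrees between the current and delayed iterate
    (hblock : x i = xtil i)
    -- sufficient-descent property of the best response at the delayed point (Proposition 1)
    (hdesc : (xhat i - xtil i) * gradient f xtil i + gblk i (xhat i) - gblk i (xtil i) ≤
      -c * (xhat i - xtil i) ^ 2)
    (xplus : EuclideanSpace ℝ (Fin n))
    -- the update changes only block i
    (hupd : xplus = Function.update x i (x i + γ * (xhat i - x i))) :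
    f xplus + ∑ j, gblk j (xplus j) ≤
      (f x + ∑ j, gblk j (x j)) - γ * (c - γ * L_f) * (xhat i - xtil i) ^ 2 +
        L_f / 2 * ‖x - xtil‖ ^ 2 := by
  set d := xhat i - xtil i
  have hxplus : xplus = x + EuclideanSpace.single i (γ * d) := by
    ext j
    rw [hupd, PiLp.add_apply, PiLp.single_apply]
    by_cases hji : j = i
    · subst hji; simp [d, hblock]
    · simp [hji]
  have hf_step : f xplus ≤ f x + γ * d * gradient f x i + L_f / 2 * (γ * d) ^ 2 := by
    have h := le_add_inner_gradient_add_of_lipschitz_gradient (hf.differentiable one_ne_zero)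
      hLip x (EuclideanSpace.single i (γ * d))
    rw [← hxplus, real_inner_comm, EuclideanSpace.inner_single_left, PiLp.norm_single,
      Real.norm_eq_abs, sq_abs, starRingEnd_apply, star_trivial] at h
    linarith
  have hg_step : ∑ j, gblk j (xplus j) ≤
      ∑ j, gblk j (x j) + γ * (gblk i (xhat i) - gblk i (xtil i)) := by
    have h := Finset.sum_apply_update_sub_sum gblk x i (x i + γ * (xhat i - x i))
    have hconv := (hgcv i).le_add_mul_sub hγ0.le hγ1 (x i) (xhat i)
    rw [← hupd] at h
    rw [← hblock]
    linarith
  have hcross : γ * d * (gradient f x i - gradient f xtil i) ≤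
      L_f / 2 * (γ * d) ^ 2 + L_f / 2 * ‖x - xtil‖ ^ 2 :=
    mul_le_half_mul_sq_add_half_mul_sq hLf.le (abs_gradient_apply_sub_le hLip x xtil i)
  have hdesc_γ := mul_le_mul_of_nonneg_left hdesc hγ0.le
  linarith

/-- Deterministic single-iteration descent estimate (chain (43)) for a block update:
`f` is C¹ with `L_f`-Lipschitz gradient, `g = ∑ⱼ gⱼ` is block-separable convex,
the delayed iterate `x̃` agrees with `x` on the updated scalar block `i`, the
best response `x̂` at `x̃` satisfies the sufficient-descent inequality with modulus `c`,
and the update changes only block `i` via `x⁺ᵢ = xᵢ + γ(x̂ᵢ − xᵢ)`. -/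
theorem stmt_18 (n : ℕ) (f : EuclideanSpace ℝ (Fin n) → ℝ) (L_f c γ : ℝ)
    (hf : ContDiff ℝ 1 f) (hLf : 0 < L_f) (hc : 0 < c)
    (hγ0 : 0 < γ) (hγ1 : γ ≤ 1)
    (gblk : Fin n → ℝ → ℝ) (hgcv : ∀ j, ConvexOn ℝ Set.univ (gblk j))
    (hLip : ∀ x y : EuclideanSpace ℝ (Fin n),
      ‖gradient f x - gradient f y‖ ≤ L_f * ‖x - y‖)
    (x xtil xhat : EuclideanSpace ℝ (Fin n)) (i : Fin n)
    -- Assumption D4: the updated block agrees between the current and delayed iterate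
    (hblock : x i = xtil i)
    -- sufficient-descent property of the best response at the delayed point (Proposition 1)
    (hdesc : (xhat i - xtil i) * gradient f xtil i + gblk i (xhat i) - gblk i (xtil i) ≤
      -c * (xhat i - xtil i) ^ 2)
    (xplus : EuclideanSpace ℝ (Fin n))
    -- the update changes only block i
    (hupd : xplus = Function.update x i (x i + γ * (xhat i - x i))) :
    f xplus + ∑ j, gblk j (xplus j) ≤
      (f x + ∑ j, gblk j (x j)) - γ * (c - γ * L_f) * (xhat i - xtil i) ^ 2 +
        L_f / 2 * ‖x - xtil‖ ^ 2 :=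
  stmt_18_general n f L_f c γ hf hLf hγ0 hγ1 gblk hgcv hLip x xtil xhat i hblock hdesc xplus hupd
end

section
/- Let h_log : ℝ → ℝ be defined by h_log(x) = log(1 + θ|x|)/log(1 + θ) for θ > 0, and set η = θ/log(1+θ). Then h⁻(x) := η|x| − h_log(x) is convex and continuously differentiable on ℝ, with derivative (h⁻)'(x) = sign(x)·(θ/log(1+θ))·(θ|x|/(1+θ|x|)) for x ≠ 0 and (h⁻)'(0) = 0. -/
/-!
Write `h⁻(x) = ψ(|x|)` with `ψ(t) = η t − log(1 + θt)/log(1 + θ)`. The profile `ψ` is smooth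
near `[0, ∞)` with `ψ'(t) = η · θt/(1 + θt)`, which vanishes at `0` — the slopes of `η|x|` and
`h_log` match there — so the even extension `ψ ∘ |·|` is differentiable at `0` as well, with
derivative `sign x · ψ'(|x|)`. Since `ψ'` is nonnegative and increasing on `[0, ∞)`, `ψ` is convex
and monotone there, and composing with the convex function `|·|` keeps it convex.
-/

open Set

lemma convexOn_of_hasDerivAt_of_monotoneOn {D : Set ℝ} (hD : Convex ℝ D) {f f' : ℝ → ℝ}
    (hf : ∀ x ∈ D, HasDerivAt f (f' x) x) (hf' : MonotoneOn f' D) : ConvexOn ℝ D f := by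
  refine (hf'.mono interior_subset).congr (fun x hx ↦ ?_) |>.convexOn_of_deriv hD
    (fun x hx ↦ (hf x hx).continuousAt.continuousWithinAt)
    (fun x hx ↦ (hf x (interior_subset hx)).differentiableAt.differentiableWithinAt)
  exact ((hf x (interior_subset hx)).deriv).symm

lemma Real.sign_mul_abs_self (x : ℝ) : Real.sign x * |x| = x := by
  rcases lt_trichotomy x 0 with hx | rfl | hx
  · rw [Real.sign_of_neg hx, abs_of_neg hx, neg_one_mul, neg_neg]
  · simp
  · rw [Real.sign_of_pos hx, abs_of_pos hx, one_mul]

section EvenExtension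

variable {ψ ψ' : ℝ → ℝ} (hψ : ∀ t, 0 ≤ t → HasDerivAt ψ (ψ' t) t) (hψ'₀ : ψ' 0 = 0)
include hψ

include hψ'₀ in
lemma hasDerivAt_comp_abs (x : ℝ) :
    HasDerivAt (fun y ↦ ψ |y|) (Real.sign x * ψ' |x|) x := by
  have on_Ici : ∀ x, 0 ≤ x → HasDerivWithinAt (fun y ↦ ψ |y|) (ψ' x) (Ici 0) x := fun x hx ↦
    (hψ x hx).hasDerivWithinAt.congr (fun y hy ↦ by rw [abs_of_nonneg hy])
      (by rw [abs_of_nonneg hx])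
  have on_Iic : ∀ x, x ≤ 0 → HasDerivWithinAt (fun y ↦ ψ |y|) (-ψ' (-x)) (Iic 0) x := fun x hx ↦ by
    have := ((hψ (-x) (neg_nonneg.2 hx)).comp x (hasDerivAt_neg x)).hasDerivWithinAt (s := Iic 0)
    rw [mul_neg_one] at this
    exact this.congr (fun y hy ↦ by simp [abs_of_nonpos (mem_Iic.1 hy)])
      (by simp [abs_of_nonpos hx])
  rcases lt_trichotomy x 0 with hx | rfl | hx
  · rw [Real.sign_of_neg hx, abs_of_neg hx, neg_one_mul]
    exact (on_Iic x hx.le).hasDerivAt (Iic_mem_nhds hx)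
  · rw [Real.sign_zero, zero_mul, ← hasDerivWithinAt_univ, ← Iic_union_Ici (a := (0 : ℝ))]
    have hl := on_Iic 0 le_rfl
    have hr := on_Ici 0 le_rfl
    rw [neg_zero, hψ'₀, neg_zero] at hl
    rw [hψ'₀] at hr
    exact hl.union hr
  · rw [Real.sign_of_pos hx, abs_of_pos hx, one_mul]
    exact (on_Ici x hx.le).hasDerivAt (Ici_mem_nhds hx)

lemma convexOn_univ_comp_abs (hψ'_nonneg : 0 ≤ ψ' 0) (hψ' : MonotoneOn ψ' (Ici 0)) :
    ConvexOn ℝ univ (fun y ↦ ψ |y|) := by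
  have habs : (|·|) '' univ = Ici (0 : ℝ) := by
    ext t; simpa using ⟨fun ⟨x, hx⟩ ↦ hx ▸ abs_nonneg x, fun ht ↦ ⟨t, abs_of_nonneg ht⟩⟩
  have hconv : ConvexOn ℝ (Ici 0) ψ := convexOn_of_hasDerivAt_of_monotoneOn (convex_Ici 0) hψ hψ'
  have hmono : MonotoneOn ψ (Ici 0) :=
    monotoneOn_of_hasDerivWithinAt_nonneg (convex_Ici 0)
      (fun t ht ↦ (hψ t ht).continuousAt.continuousWithinAt)
      (fun t ht ↦ (hψ t (interior_subset ht)).hasDerivWithinAt)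
      fun t ht ↦ hψ'_nonneg.trans <|
        hψ' (mem_Ici.2 le_rfl) (interior_subset ht) (interior_subset ht)
  rw [← habs] at hconv hmono
  exact hconv.comp (convexOn_univ_norm (E := ℝ)) hmono

end EvenExtension

noncomputable def logPenaltyProfile (θ L t : ℝ) : ℝ := θ / L * t - Real.log (1 + θ * t) / L

lemma hasDerivAt_logPenaltyProfile {θ L t : ℝ} (ht : 1 + θ * t ≠ 0) :
    HasDerivAt (logPenaltyProfile θ L) (θ / L * (θ * t / (1 + θ * t))) t := by
  have hlog := (((hasDerivAt_id' t).const_mul θ).const_add 1).log ht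
  refine (((hasDerivAt_id' t).const_mul (θ / L)).sub (hlog.div_const L)).congr_deriv ?_
  field_simp
  ring

lemma monotoneOn_mul_div_one_add_mul {θ : ℝ} (hθ : 0 ≤ θ) :
    MonotoneOn (fun t ↦ θ * t / (1 + θ * t)) (Ici 0) := by
  intro a ha b hb hab
  have hθa : 0 ≤ θ * a := mul_nonneg hθ ha
  have hθb : 0 ≤ θ * b := mul_nonneg hθ hb
  rw [div_le_div_iff₀ (by positivity) (by positivity)]
  nlinarith [mul_le_mul_of_nonneg_left hab hθ]

/-- DC decomposition of the logarithmic sparsity regularizer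
`h_log(x) = log(1 + θ|x|)/log(1 + θ)`: with `η = θ/log(1+θ)`, the function
`h⁻(x) = η|x| − h_log(x)` is convex and continuously differentiable on ℝ, with
derivative `sign(x) · (θ/log(1+θ)) · (θ|x|/(1+θ|x|))` (which is `0` at `x = 0`). -/
theorem stmt_19 (θ : ℝ) (hθ : 0 < θ)
    (η : ℝ) (hη : η = θ / Real.log (1 + θ))
    (hminus : ℝ → ℝ)
    (hdef : ∀ x, hminus x = η * |x| - Real.log (1 + θ * |x|) / Real.log (1 + θ))
    (d : ℝ → ℝ)
    (hd : ∀ x, d x = Real.sign x * (θ / Real.log (1 + θ)) * (θ * |x| / (1 + θ * |x|))) :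
    ConvexOn ℝ Set.univ hminus ∧ (∀ x, HasDerivAt hminus (d x) x) ∧ Continuous d := by
  set L := Real.log (1 + θ)
  have hL : 0 < L := Real.log_pos (by linarith)
  set ψ' : ℝ → ℝ := fun t ↦ θ / L * (θ * t / (1 + θ * t))
  have hψ : ∀ t, 0 ≤ t → HasDerivAt (logPenaltyProfile θ L) (ψ' t) t :=
    fun t ht ↦ hasDerivAt_logPenaltyProfile (by positivity)
  have hψ'₀ : ψ' 0 = 0 := by simp [ψ']
  have hminus_eq : hminus = fun x ↦ logPenaltyProfile θ L |x| :=
    funext fun x ↦ by rw [hdef, hη, logPenaltyProfile]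
  have hd_eq : d = fun x ↦ Real.sign x * ψ' |x| := funext fun x ↦ by rw [hd, mul_assoc]
  refine ⟨?_, ?_, ?_⟩
  · rw [hminus_eq]
    exact convexOn_univ_comp_abs hψ hψ'₀.ge
      fun a ha b hb hab ↦ mul_le_mul_of_nonneg_left
        (monotoneOn_mul_div_one_add_mul hθ.le ha hb hab) (by positivity)
  · rw [hminus_eq, hd_eq]
    exact hasDerivAt_comp_abs hψ hψ'₀
  · have hd_eq' : d = fun x ↦ θ / L * (θ * x / (1 + θ * |x|)) := funext fun x ↦ by
      rw [hd]
      linear_combination θ / L * θ / (1 + θ * |x|) * Real.sign_mul_abs_self x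
    rw [hd_eq']
    exact continuous_const.mul
      ((continuous_const.mul continuous_id).div (by fun_prop) fun x ↦ by positivity)
end
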